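/- With T, e, L, λ as above, the map d(g) = L*λ(g) − λ(g)L* restricts, for each g ∈ Aut(T), to a bounded operator on ℓ₂(T) of norm at most 2, and d : Aut(T) → B(ℓ₂(T)) is a bounded derivation: d(gf) = d(g)λ(f) + λ(g)d(f) for all g, f ∈ Aut(T). -/

import Mathlib

open scoped ENNReal

noncomputable section

/-- The vertex set of the `ℵ₀`-regular tree, realised as the free group `F_∞`. -/
abbrev V : Type := FreeGroup ℕ

/-- The Cayley graph of `F_∞` with respect to its free generating set:
the `ℵ₀`-regular tree `T`. -/
def treeGraph : SimpleGraph V :=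
  SimpleGraph.fromRel (fun s t => ∃ i : ℕ, t = s * FreeGroup.of i)

/-- The automorphism group `Aut(T)` of the `ℵ₀`-regular tree. -/
abbrev TreeAut := treeGraph ≃g treeGraph

/-- `ℓ_p(T)`. -/
abbrev lpT (p : ℝ≥0∞) := lp (fun _ : V => ℂ) p

lemma memℓp_comp {p : ℝ≥0∞} (g : V ≃ V) {x : V → ℂ} (h : Memℓp x p) :
    Memℓp (fun v => x (g v)) p := by
  rcases ENNReal.trichotomy p with rfl | rfl | hp
  · rw [memℓp_zero_iff] at h ⊢
    exact Set.Finite.preimage g.injective.injOn h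
  · rw [memℓp_infty_iff] at h ⊢
    apply h.mono
    rintro r ⟨v, rfl⟩
    exact ⟨g v, rfl⟩
  · apply memℓp_gen
    exact (g.summable_iff (f := fun v => ‖x v‖ ^ p.toReal)).2 ((memℓp_gen_iff hp).1 h)

/-- The shift representation of permutations of `T` on `ℂ^T`: `λ(g)x = x(g⁻¹ ·)`. -/
def lamFull (g : V ≃ V) : (V → ℂ) →ₗ[ℂ] (V → ℂ) where
  toFun x := fun v => x (g.symm v)
  map_add' _ _ := rfl
  map_smul' _ _ := rfl

/-- The shift representation of permutations of `T` on `ℓ_p(T)`: `λ(g)x = x(g⁻¹ ·)`. -/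
def lam (p : ℝ≥0∞) (g : V ≃ V) : lpT p →ₗ[ℂ] lpT p where
  toFun x := ⟨fun v => x (g.symm v), memℓp_comp g.symm (lp.memℓp x)⟩
  map_add' _ _ := rfl
  map_smul' _ _ := rfl

attribute [local instance] Classical.propDecidable

/-- The fixed root `e` of the tree. -/
def root : V := 1

/-- `ŝ`: the parent of the vertex `s`, i.e. the penultimate vertex on the geodesic from
the root `e` to `s` (with `ê = e`), obtained by dropping the last letter of the reduced
word `s`. -/
def parent (s : V) : V := FreeGroup.mk s.toWord.dropLast

/-- The adjoint `L*` of the parent operator `L`, as an operator on `ℂ^T`: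
`(L* y)(s) = y(ŝ)` for `s ≠ e` and `(L* y)(e) = 0`; equivalently `L*(𝟙_s) = Σ_{t̂ = s} 𝟙_t`. -/
def Lstar : (V → ℂ) →ₗ[ℂ] (V → ℂ) where
  toFun x := fun v => if v = root then 0 else x (parent v)
  map_add' x y := by
    funext v; by_cases h : v = root <;> simp [h]
  map_smul' c x := by
    funext v; by_cases h : v = root <;> simp [h]

/-- The derivation `d(g) = L*λ(g) − λ(g)L*`, as an operator on `ℂ^T`. -/
def dtree (g : V ≃ V) : (V → ℂ) →ₗ[ℂ] (V → ℂ) :=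
  Lstar ∘ₗ lamFull g - lamFull g ∘ₗ Lstar

/-! Off the geodesic from the root `e` to `g e` an automorphism `g` maps the parent of `g⁻¹ v`
to the parent of `v`, so `L*λ(g)` and `λ(g)L*` agree there and `d(g)x` is supported on that
geodesic, i.e. on the ancestors of `g e`. Its `g⁻¹`-image lies among the ancestors of `g⁻¹ e`.
Taking parents is injective on a chain of ancestors away from `e`, so on this support each of
the two terms of `d(g)x` is a rearrangement of values of `x`, of norm at most `‖x‖`. -/

open FreeGroup

lemma toWord_parent (s : V) : (parent s).toWord = s.toWord.dropLast := by
  rw [parent, toWord_mk, (isReduced_toWord.infix (List.dropLast_prefix _).isInfix).reduce_eq]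

lemma norm_parent (s : V) : (parent s).norm = s.norm - 1 := by
  simp only [FreeGroup.norm, toWord_parent, List.length_dropLast]

lemma parent_mul_getLast {s : V} (hs : s.toWord ≠ []) :
    parent s * mk [s.toWord.getLast hs] = s := by
  rw [parent, mul_mk, List.dropLast_append_getLast, mk_toWord]

lemma mk_false_eq_inv_of (i : ℕ) : (mk [(i, false)] : V) = (of i)⁻¹ := by
  rw [of, inv_mk]; rfl

lemma norm_ne_zero_of_ne_root {s : V} (hs : s ≠ root) : s.norm ≠ 0 :=
  mt FreeGroup.norm_eq_zero.1 hs

lemma parent_ne_self {s : V} (hs : s ≠ root) : parent s ≠ s := by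
  intro h
  have := congrArg FreeGroup.norm h
  rw [norm_parent] at this
  have := norm_ne_zero_of_ne_root hs
  omega

lemma adj_parent {s : V} (hs : s ≠ root) : treeGraph.Adj s (parent s) := by
  have hw : s.toWord ≠ [] := fun h => hs (toWord_eq_nil_iff.1 h)
  have hs' := parent_mul_getLast hw
  generalize s.toWord.getLast hw = a at hs'
  obtain ⟨i, b⟩ := a
  refine (SimpleGraph.fromRel_adj _ _ _).2 ⟨(parent_ne_self hs).symm, ?_⟩
  cases b with
  | false =>
    rw [mk_false_eq_inv_of] at hs'
    exact Or.inl ⟨i, mul_inv_eq_iff_eq_mul.1 hs'⟩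
  | true => exact Or.inr ⟨i, hs'.symm⟩

lemma parent_eq_or_of_eq_mul_of {s t : V} {i : ℕ} (ht : t = s * of i) :
    parent t = s ∨ parent s = t := by
  by_cases hlast : s.toWord.getLast? = some (i, false)
  · right
    have hw : s.toWord ≠ [] := by rintro h; simp [h] at hlast
    rw [List.getLast?_eq_some_getLast hw, Option.some_inj] at hlast
    rw [ht]
    conv_rhs => rw [← parent_mul_getLast hw, hlast, mk_false_eq_inv_of, inv_mul_cancel_right]
  · left
    have hred : IsReduced (s.toWord ++ [(i, true)]) := by
      refine isReduced_toWord.append IsReduced.singleton ?_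
      rintro ⟨j, b⟩ hj ⟨k, c⟩ hk rfl
      cases b <;> simp_all
    have htw : t.toWord = s.toWord ++ [(i, true)] := by
      rw [ht, toWord_mul, toWord_of, hred.reduce_eq]
    rw [parent, htw, List.dropLast_concat, mk_toWord]

lemma parent_eq_or_of_adj {s t : V} (h : treeGraph.Adj s t) : parent t = s ∨ parent s = t := by
  rcases ((SimpleGraph.fromRel_adj _ _ _).1 h).2 with ⟨i, ht⟩ | ⟨i, hs⟩
  · exact parent_eq_or_of_eq_mul_of ht
  · exact (parent_eq_or_of_eq_mul_of hs).symm

lemma parent_parent_ne_self {s : V} (hs : s ≠ root) : parent (parent s) ≠ s := by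
  intro h
  have := congrArg FreeGroup.norm h
  rw [norm_parent, norm_parent] at this
  have := norm_ne_zero_of_ne_root hs
  omega

def ancestors (r : V) : Set V := Set.range fun j : ℕ => parent^[j] r

lemma norm_iterate_parent (r : V) (j : ℕ) : (parent^[j] r).norm = r.norm - j := by
  induction j with
  | zero => rfl
  | succ j ih => rw [Function.iterate_succ_apply', norm_parent, ih, Nat.sub_sub]

lemma self_mem_ancestors (r : V) : r ∈ ancestors r := ⟨0, rfl⟩

lemma parent_mem_ancestors {r v : V} (hv : v ∈ ancestors r) : parent v ∈ ancestors r := by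
  obtain ⟨j, rfl⟩ := hv
  exact ⟨j + 1, Function.iterate_succ_apply' _ _ _⟩

lemma root_mem_ancestors (r : V) : root ∈ ancestors r :=
  ⟨r.norm, FreeGroup.norm_eq_zero.1 (by rw [norm_iterate_parent, Nat.sub_self])⟩

lemma injOn_parent_ancestors (r : V) : Set.InjOn parent (ancestors r \ {root}) := by
  rintro _ ⟨⟨j, rfl⟩, hj⟩ _ ⟨⟨k, rfl⟩, hk⟩ hjk
  have hj' : r.norm - j ≠ 0 := by rwa [← norm_iterate_parent, Ne, FreeGroup.norm_eq_zero]
  have hk' : r.norm - k ≠ 0 := by rwa [← norm_iterate_parent, Ne, FreeGroup.norm_eq_zero]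
  have := congrArg FreeGroup.norm hjk
  rw [norm_parent, norm_parent, norm_iterate_parent, norm_iterate_parent] at this
  obtain rfl : j = k := by omega
  rfl

lemma mem_ancestors_of_map_parent_ne (h : TreeAut) {v : V} (hv : h v ≠ root)
    (hne : h (parent v) ≠ parent (h v)) : v ∈ ancestors (h.symm root) := by
  -- The neighbour `c` of `v` sent to the parent of `h v` is not the parent of `v`, so it is a
  -- child of `v`; the same holds at `c`, whose image is one step closer to the root.
  set c := h.symm (parent (h v)) with hc_def
  have hc : h c = parent (h v) := h.apply_symm_apply _
  have hadj : treeGraph.Adj v c := h.map_rel_iff.1 (by rw [hc]; exact adj_parent hv)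
  have hpc : parent c = v :=
    (parent_eq_or_of_adj hadj).resolve_right fun hpv => hne (by rw [hpv, hc])
  rw [← hpc]
  apply parent_mem_ancestors
  by_cases hroot : parent (h v) = root
  · rw [hc_def, hroot]
    exact self_mem_ancestors _
  · exact mem_ancestors_of_map_parent_ne h (hc ▸ hroot)
      (by rw [hpc, hc]; exact (parent_parent_ne_self hv).symm)
termination_by (h v).norm
decreasing_by
  rw [hc, norm_parent]
  have := norm_ne_zero_of_ne_root hv
  omega

def parentDefect (h : V ≃ V) : Set V :=
  {v | v = root ∨ h v = root ∨ h (parent v) ≠ parent (h v)}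

lemma parentDefect_subset_ancestors (h : TreeAut) :
    parentDefect h.toEquiv ⊆ ancestors (h.symm root) := by
  intro v hv
  by_cases hroot : h v = root
  · rw [← hroot]
    exact ⟨0, h.symm_apply_apply v⟩
  rcases hv with rfl | hv | hne
  · exact root_mem_ancestors _
  · exact absurd hv hroot
  · exact mem_ancestors_of_map_parent_ne h hroot hne

lemma mem_parentDefect_symm (h : V ≃ V) {v : V} :
    v ∈ parentDefect h.symm ↔ h.symm v ∈ parentDefect h := by
  have hcomm : h.symm (parent v) = parent (h.symm v) ↔ h (parent (h.symm v)) = parent v := by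
    rw [Equiv.symm_apply_eq, eq_comm]
  simp only [parentDefect, Set.mem_ofPred_eq, Equiv.apply_symm_apply, ne_eq, hcomm]
  tauto

namespace lp

variable {α E : Type*} [NormedAddCommGroup E] {p : ℝ≥0∞} {s : Set α} {φ : α → α} {f : α → E}

lemma sum_rpow_le_norm_rpow_of_injOn (hp : 0 < p.toReal) (x : lp (fun _ : α => E) p)
    (hφ : s.InjOn φ) (hf : ∀ i, ‖f i‖ ≤ s.indicator (fun i => ‖x (φ i)‖) i) (t : Finset α) :
    ∑ i ∈ t, ‖f i‖ ^ p.toReal ≤ ‖x‖ ^ p.toReal := by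
  calc ∑ i ∈ t, ‖f i‖ ^ p.toReal ≤ ∑ i ∈ t with i ∈ s, ‖x (φ i)‖ ^ p.toReal := by
        rw [Finset.sum_filter]
        refine Finset.sum_le_sum fun i _ => ?_
        by_cases hi : i ∈ s
        · simpa only [if_pos hi] using
            Real.rpow_le_rpow (norm_nonneg _) (by simpa [hi] using hf i) hp.le
        · have : f i = 0 := norm_le_zero_iff.1 (by simpa [hi] using hf i)
          simp [if_neg hi, this, Real.zero_rpow hp.ne']
    _ = ∑ j ∈ (t.filter (· ∈ s)).image φ, ‖x j‖ ^ p.toReal :=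
        (Finset.sum_image (f := fun j => ‖x j‖ ^ p.toReal) fun i hi j hj =>
          hφ (Finset.mem_filter.1 hi).2 (Finset.mem_filter.1 hj).2).symm
    _ ≤ ‖x‖ ^ p.toReal := sum_rpow_le_norm_rpow hp x _

lemma exists_norm_le_of_injOn [Fact (1 ≤ p)] (hp : 0 < p.toReal) (x : lp (fun _ : α => E) p)
    (hφ : s.InjOn φ) (hf : ∀ i, ‖f i‖ ≤ s.indicator (fun i => ‖x (φ i)‖) i) :
    ∃ y : lp (fun _ : α => E) p, ⇑y = f ∧ ‖y‖ ≤ ‖x‖ :=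
  ⟨⟨f, memℓp_gen' (sum_rpow_le_norm_rpow_of_injOn hp x hφ hf)⟩, rfl,
    norm_le_of_forall_sum_le hp (norm_nonneg x) (sum_rpow_le_norm_rpow_of_injOn hp x hφ hf)⟩

end lp

lemma Lstar_lamFull_apply_of_notMem {g : V ≃ V} {v : V} (hv : v ∉ parentDefect g.symm)
    (x : V → ℂ) : Lstar (lamFull g x) v = lamFull g (Lstar x) v := by
  simp only [parentDefect, Set.mem_ofPred_eq, not_or, not_not] at hv
  obtain ⟨hv, hgv, hcomm⟩ := hv
  simp [Lstar, lamFull, hv, hgv, hcomm]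

lemma dtree_eq_indicator_sub (g : V ≃ V) (x : V → ℂ) :
    dtree g x = (parentDefect g.symm).indicator (Lstar (lamFull g x))
      - (parentDefect g.symm).indicator (lamFull g (Lstar x)) := by
  funext v
  by_cases hv : v ∈ parentDefect g.symm
  · simp [dtree, hv]
  · simp [dtree, hv, Lstar_lamFull_apply_of_notMem hv]

lemma exists_lp_sub_eq_dtree (g : TreeAut) (x : lpT 2) :
    ∃ P Q : lpT 2, ‖P‖ ≤ ‖x‖ ∧ ‖Q‖ ≤ ‖x‖ ∧ dtree g.toEquiv x = ⇑P - ⇑Q := by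
  set D := parentDefect g.toEquiv.symm
  have hD : D ⊆ ancestors (g root) := parentDefect_subset_ancestors g.symm
  have hp : 0 < (2 : ℝ≥0∞).toReal := by norm_num
  obtain ⟨P, hP, hPx⟩ := lp.exists_norm_le_of_injOn (s := D \ {root})
      (φ := fun v => g.toEquiv.symm (parent v)) hp x
      (g.toEquiv.symm.injective.comp_injOn
        ((injOn_parent_ancestors _).mono (Set.sdiff_subset_sdiff_left hD)))
      (f := D.indicator (Lstar (lamFull g.toEquiv x))) fun v => by
    by_cases hv : v ∈ D <;> by_cases hr : v = root <;> simp [hv, hr, Lstar, lamFull]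
  obtain ⟨Q, hQ, hQx⟩ := lp.exists_norm_le_of_injOn (s := {v ∈ D | g.toEquiv.symm v ≠ root})
      (φ := fun v => parent (g.toEquiv.symm v)) hp x
      ((injOn_parent_ancestors _).comp g.toEquiv.symm.injective.injOn fun v hv =>
        ⟨parentDefect_subset_ancestors g ((mem_parentDefect_symm _).1 hv.1), hv.2⟩)
      (f := D.indicator (lamFull g.toEquiv (Lstar x))) fun v => by
    by_cases hv : v ∈ D <;> by_cases hr : g.toEquiv.symm v = root <;>
      simp [hv, hr, Lstar, lamFull]
  exact ⟨P, Q, hPx, hQx, by rw [dtree_eq_indicator_sub, hP, hQ]⟩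

lemma dtree_trans (f g : V ≃ V) :
    dtree (f.trans g) = dtree g ∘ₗ lamFull f + lamFull g ∘ₗ dtree f := by
  have hlam : lamFull (f.trans g) = lamFull g ∘ₗ lamFull f := rfl
  simp only [dtree, hlam, LinearMap.sub_comp, LinearMap.comp_sub, LinearMap.comp_assoc]
  abel

/-- The map `d(g) = L*λ(g) − λ(g)L*` restricts, for each `g ∈ Aut(T)`, to a bounded
operator on `ℓ₂(T)` of norm at most `2`, and `d : Aut(T) → B(ℓ₂(T))` is a bounded
derivation: `d(gf) = d(g)λ(f) + λ(g)d(f)`. -/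
theorem dtree_bounded_derivation :
    (∀ g : TreeAut, ∀ x : lpT 2, Memℓp (dtree g.toEquiv (x : V → ℂ)) 2) ∧
    (∀ g : TreeAut, ∀ (x y : lpT 2),
      (y : V → ℂ) = dtree g.toEquiv (x : V → ℂ) → ‖y‖ ≤ 2 * ‖x‖) ∧
    (∀ g f : TreeAut, ∀ x : lpT 2,
      dtree (f.trans g).toEquiv (x : V → ℂ)
        = dtree g.toEquiv (lamFull f.toEquiv (x : V → ℂ))
          + lamFull g.toEquiv (dtree f.toEquiv (x : V → ℂ))) := by
  refine ⟨fun g x => ?_, fun g x y hy => ?_, fun g f x =>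
    LinearMap.congr_fun (dtree_trans f.toEquiv g.toEquiv) x⟩
  · obtain ⟨P, Q, -, -, hPQ⟩ := exists_lp_sub_eq_dtree g x
    rw [hPQ, ← lp.coeFn_sub]
    exact lp.memℓp (P - Q)
  · obtain ⟨P, Q, hP, hQ, hPQ⟩ := exists_lp_sub_eq_dtree g x
    have hy' : y = P - Q := lp.ext (by rw [hy, hPQ, lp.coeFn_sub])
    calc ‖y‖ ≤ ‖P‖ + ‖Q‖ := hy' ▸ norm_sub_le P Q
      _ ≤ 2 * ‖x‖ := by linarith
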